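/- Let q ∈ ℂ×. The matrix of the map φ: ℂ[L_L] → (ℂ²)^{⊗L} given by φ(π) = Σ_ε ∏_{i<π(i)} δ_{ε_i + ε_{π(i)}, 1} (−q)^{−ε_i + 1/2} |ε⟩ has full rank; i.e., the vectors {φ(π) : π a link pattern of size L} are linearly independent for every nonzero q (where (−q)^{1/2} is a fixed square root). -/

import Mathlib

/-!
Send a link pattern `π` to its Dyck word `w(π)`: `0` at the left end of each arc, `1` at the
right end. If `φ(π)(ε) ≠ 0` then `ε` has opposite spins on every arc of `π`, which forces
`w(π) ≤ ε` lexicographically, while `φ(π)(w(π))` is a power of `ρ ≠ 0`. A noncrossing matching is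
recovered from its Dyck word, so the matrix `(φ(π)(w(π')))` is triangular with nonzero diagonal
for the lexicographic order on Dyck words.
-/

open Finset

theorem linearIndependent_of_triangular {ι β γ R : Type*} [Ring R] [NoZeroDivisors R]
    [PartialOrder γ] {v : ι → β → R} (key : ι → γ) (hkey : Function.Injective key) (e : ι → β)
    (hdiag : ∀ i, v i (e i) ≠ 0) (hsupp : ∀ i j, v j (e i) ≠ 0 → key j ≤ key i) :
    LinearIndependent R v := by
  classical
  refine linearIndependent_iff'.2 fun s g hsum => ?_
  by_contra! hne
  obtain ⟨i, hi, hmin⟩ := (s.filter (g · ≠ 0)).exists_minimalFor key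
    (by simpa [Finset.Nonempty] using hne)
  obtain ⟨his, hgi⟩ := mem_filter.1 hi
  have hsum_at : ∑ j ∈ s, g j * v j (e i) = g i * v i (e i) := by
    refine sum_eq_single_of_mem i his fun j hjs hji => ?_
    by_contra hj
    obtain ⟨hgj, hvj⟩ := mul_ne_zero_iff.1 hj
    have hle := hsupp i j hvj
    exact hji (hkey (hle.antisymm (hmin (mem_filter.2 ⟨hjs, hgj⟩) hle)))
  have := congrFun hsum (e i)
  simp only [Finset.sum_apply, Pi.smul_apply, smul_eq_mul, Pi.zero_apply, hsum_at] at this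
  exact mul_ne_zero hgi (hdiag i) this

section LinkPattern

variable {α : Type*} [LinearOrder α]

structure IsLinkPattern (f : α → α) : Prop where
  involutive : Function.Involutive f
  ne_self : ∀ i, f i ≠ i
  noncrossing : ¬ ∃ i j k l, i < j ∧ j < k ∧ k < l ∧ f i = k ∧ f j = l

def dyckWord (f : α → α) (i : α) : Fin 2 :=
  if i < f i then 0 else 1

theorem dyckWord_eq_zero_iff {f : α → α} {i : α} : dyckWord f i = 0 ↔ i < f i := by
  unfold dyckWord; split_ifs <;> simp_all

namespace IsLinkPattern

variable {f g : α → α}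

theorem dyckWord_eq_one_iff (hf : IsLinkPattern f) {i : α} : dyckWord f i = 1 ↔ f i < i := by
  unfold dyckWord; split_ifs with h
  · simp [h.not_gt]
  · simp [lt_of_le_of_ne (not_lt.1 h) (hf.ne_self i)]

theorem mapsTo_Ioo (hf : IsLinkPattern f) (i : α) :
    Set.MapsTo f (Set.Ioo i (f i)) (Set.Ioo i (f i)) := by
  rintro k ⟨hik, hki⟩
  have hfk_ne_i : f k ≠ i := fun h => hki.ne (by rw [← h, hf.involutive])
  have hfk_ne_fi : f k ≠ f i := fun h => hik.ne' (hf.involutive.injective h)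
  refine ⟨(lt_or_gt_of_ne hfk_ne_i).resolve_left fun h => ?_,
    (lt_or_gt_of_ne hfk_ne_fi).resolve_right fun h => ?_⟩
  · exact hf.noncrossing ⟨f k, i, k, f i, h, hik, hki, hf.involutive k, rfl⟩
  · exact hf.noncrossing ⟨i, k, f i, f k, hik, hki, h, rfl, rfl⟩

/-- The left end `g j` of the `g`-arc at `j` is also a left end for `f`; if it lay inside the
`f`-arc `(f j, j)`, its `f`-partner would be a right end `< j` at which `f` and `g` disagree. -/
theorem not_apply_lt_of_dyckWord_eq (hf : IsLinkPattern f) (hg : IsLinkPattern g)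
    (hw : dyckWord f = dyckWord g) {j : α}
    (ih : ∀ c < j, f c < c → f c = g c) (hgj : g j < j) : ¬ f j < g j := by
  intro hlt
  have hopen : g j < f (g j) := by
    rw [← dyckWord_eq_zero_iff, hw, dyckWord_eq_zero_iff, hg.involutive]; exact hgj
  obtain ⟨-, hhi⟩ : f (g j) ∈ Set.Ioo (f j) j := by
    have := hf.mapsTo_Ioo (f j) ⟨hlt, by rwa [hf.involutive]⟩
    rwa [hf.involutive] at this
  have hgf : g (f (g j)) = g j := by
    rw [← ih _ hhi (by rwa [hf.involutive]), hf.involutive]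
  exact hhi.ne (by rw [← hg.involutive (f (g j)), hgf, hg.involutive])

theorem apply_eq_of_dyckWord_eq_of_apply_lt [WellFoundedLT α] (hf : IsLinkPattern f)
    (hg : IsLinkPattern g) (hw : dyckWord f = dyckWord g) (j : α) : f j < j → f j = g j := by
  induction j using WellFoundedLT.induction with
  | ind j ih =>
  intro hfj
  have hclose : ∀ c, f c < c ↔ g c < c := fun c => by
    rw [← hf.dyckWord_eq_one_iff, hw, hg.dyckWord_eq_one_iff]
  have hgj := (hclose j).1 hfj
  refine le_antisymm (not_lt.1 ?_) (not_lt.1 ?_)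
  · exact hg.not_apply_lt_of_dyckWord_eq hf hw.symm
      (fun c hc hgc => (ih c hc ((hclose c).2 hgc)).symm) hfj
  · exact hf.not_apply_lt_of_dyckWord_eq hg hw ih hgj

theorem eq_of_dyckWord_eq [WellFoundedLT α] (hf : IsLinkPattern f) (hg : IsLinkPattern g)
    (hw : dyckWord f = dyckWord g) : f = g := by
  funext j
  rcases (hf.ne_self j).lt_or_gt with hj | hj
  · exact hf.apply_eq_of_dyckWord_eq_of_apply_lt hg hw j hj
  · have hfj : f (f j) < f j := by rwa [hf.involutive]
    have := hf.apply_eq_of_dyckWord_eq_of_apply_lt hg hw (f j) hfj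
    rw [hf.involutive] at this
    rw [← hg.involutive (f j), ← this]

/-- At the first position `i` where `ε` is smaller, `ε i = 0` sits at a right end, whose left
end `f i < i` already carries `ε (f i) = dyckWord f (f i) = 0`. -/
theorem toLex_dyckWord_le [WellFoundedLT α] (hf : IsLinkPattern f) {ε : α → Fin 2}
    (hε : ∀ i, ε (f i) ≠ ε i) : toLex (dyckWord f) ≤ toLex ε := by
  refine not_lt.1 fun ⟨i, hagree, hlt⟩ => ?_
  simp only [Pi.toLex_apply] at hagree hlt
  have hεi : ε i = 0 := by omega
  have hfi : f i < i := hf.dyckWord_eq_one_iff.1 (by omega)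
  have hεfi : ε (f i) = 0 := by
    rw [hagree _ hfi, dyckWord_eq_zero_iff, hf.involutive]; exact hfi
  exact hε i (hεfi.trans hεi.symm)

end IsLinkPattern

end LinkPattern

section LinkVector

variable {α K : Type*} [LinearOrder α] [Fintype α] [Field K]

def linkVector (ρ : K) (f : α → α) (ε : α → Fin 2) : K :=
  ∏ i ∈ univ.filter (fun i => i < f i),
    if (ε i : ℕ) + (ε (f i) : ℕ) = 1 then ρ ^ ((1 : ℤ) - 2 * ((ε i : ℕ) : ℤ)) else 0

variable {ρ : K} {f : α → α}

theorem IsLinkPattern.apply_ne_of_linkVector_ne_zero (hf : IsLinkPattern f) {ε : α → Fin 2}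
    (h : linkVector ρ f ε ≠ 0) (i : α) : ε (f i) ≠ ε i := by
  have harc : ∀ i, i < f i → (ε i : ℕ) + (ε (f i) : ℕ) = 1 := fun i hi => by
    by_contra hne
    exact h (prod_eq_zero (mem_filter.2 ⟨mem_univ i, hi⟩) (if_neg hne))
  rcases (hf.ne_self i).lt_or_gt with hi | hi
  · have := harc (f i) (by rwa [hf.involutive])
    rw [hf.involutive] at this
    omega
  · have := harc i hi
    omega

theorem IsLinkPattern.linkVector_dyckWord_ne_zero (hf : IsLinkPattern f) (hρ : ρ ≠ 0) :
    linkVector ρ f (dyckWord f) ≠ 0 := by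
  refine prod_ne_zero_iff.2 fun i hi => ?_
  have hopen : i < f i := (mem_filter.1 hi).2
  have hclose : f (f i) < f i := by rwa [hf.involutive]
  rw [dyckWord_eq_zero_iff.2 hopen, hf.dyckWord_eq_one_iff.2 hclose]
  simp [hρ]

theorem linearIndependent_linkVector (hρ : ρ ≠ 0) :
    LinearIndependent K fun π : {f : α → α // IsLinkPattern f} => linkVector ρ π.val :=
  linearIndependent_of_triangular (fun π => toLex (dyckWord π.val))
    (fun π π' h => Subtype.ext (π.2.eq_of_dyckWord_eq π'.2 h)) (fun π => dyckWord π.val)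
    (fun π => π.2.linkVector_dyckWord_ne_zero hρ)
    fun _ π' h => π'.2.toLex_dyckWord_le (π'.2.apply_ne_of_linkVector_ne_zero h)

end LinkVector

theorem stmt10_general (L : ℕ) (q ρ : ℂ) (hq : q ≠ 0) (hρ : ρ ^ 2 = -q) :
    LinearIndependent ℂ
      (fun (π : {f : Fin L → Fin L //
          (∀ i, f (f i) = i) ∧ (∀ i, f i ≠ i) ∧
          ¬ ∃ i j k l : Fin L, i < j ∧ j < k ∧ k < l ∧ f i = k ∧ f j = l})
        (ε : Fin L → Fin 2) =>
        ∏ i ∈ Finset.univ.filter (fun i : Fin L => (i : ℕ) < (π.val i : ℕ)),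
          (if (ε i : ℕ) + (ε (π.val i) : ℕ) = 1 then
            ρ ^ ((1 : ℤ) - 2 * ((ε i : ℕ) : ℤ)) else 0)) := by
  have hρ0 : ρ ≠ 0 := by
    rintro rfl
    exact hq (neg_eq_zero.1 (by simpa using hρ.symm))
  -- The goal differs from the lemma by unfolding `linkVector` and by the semiring instance on `ℂ`.
  convert (linearIndependent_linkVector (α := Fin L) hρ0).comp
    (Subtype.map id fun _ (hf : _ ∧ _ ∧ _) => ⟨hf.1, hf.2.1, hf.2.2⟩)
    (Subtype.map_injective _ Function.injective_id) using 1 <;> rfl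

/-- The vectors `φ(π) ∈ (ℂ²)^{⊗L}` (realized as functions `{0,1}^L → ℂ`),
`φ(π)(ε) = ∏_{arcs i < π(i)} δ_{ε_i+ε_{π(i)},1} ρ^{1−2ε_i}` where `ρ² = −q ≠ 0`,
indexed by link patterns `π` of size `L`, are linearly independent. -/
theorem stmt10 (L : ℕ) (hL : Even L) (q ρ : ℂ) (hq : q ≠ 0) (hρ : ρ ^ 2 = -q) :
    LinearIndependent ℂ
      (fun (π : {f : Fin L → Fin L //
          (∀ i, f (f i) = i) ∧ (∀ i, f i ≠ i) ∧
          ¬ ∃ i j k l : Fin L, i < j ∧ j < k ∧ k < l ∧ f i = k ∧ f j = l})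
        (ε : Fin L → Fin 2) =>
        ∏ i ∈ Finset.univ.filter (fun i : Fin L => (i : ℕ) < (π.val i : ℕ)),
          (if (ε i : ℕ) + (ε (π.val i) : ℕ) = 1 then
            ρ ^ ((1 : ℤ) - 2 * ((ε i : ℕ) : ℤ)) else 0)) :=
  stmt10_general L q ρ hq hρ
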